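/- Let f, g_1, …, g_k be semigroup endomorphisms of the Brandt semigroup B_n with f = g_1 g_2 ⋯ g_k (composition). If f is the zero constant map ξ_θ (sending every element of B_n to θ), then g_j = ξ_θ for some j. -/

import Mathlib

/-- The underlying set of the Brandt semigroup `B_n`: pairs `(i,j)` with
`i, j ∈ [n]` together with the zero element `θ` (represented by `none`). -/
abbrev Brandt (n : ℕ) := Option (Fin n × Fin n)

/-- The Brandt semigroup operation: `(i,j) + (k,l) = (i,l)` if `j = k`, and `θ`
otherwise; `θ` is a two-sided zero. -/
def bmul {n : ℕ} : Brandt n → Brandt n → Brandt n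
  | some (i, j), some (k, l) => if j = k then some (i, l) else none
  | _, _ => none

instance {n : ℕ} : Mul (Brandt n) := ⟨bmul⟩

@[simp] lemma brandt_mul_def {n : ℕ} (x y : Brandt n) : x * y = bmul x y := rfl

/-- A map `B_n → B_n` is a (semigroup) endomorphism if it preserves the operation. -/
def IsEndo {n : ℕ} (f : Brandt n → Brandt n) : Prop :=
  ∀ x y : Brandt n, f (x * y) = f x * f y

/-- `End(B_n)`: the semigroup (indeed monoid) of endomorphisms of `B_n`.
Multiplication `f * g` is "first `f`, then `g`", the composition convention of
the paper. -/
def BrandtEnd (n : ℕ) := {f : Brandt n → Brandt n // IsEndo f}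

instance {n : ℕ} : Monoid (BrandtEnd n) where
  mul f g := ⟨g.1 ∘ f.1, fun x y =>
    (congrArg g.1 (f.2 x y)).trans (g.2 _ _)⟩
  one := ⟨id, fun _ _ => rfl⟩
  mul_assoc f g h := rfl
  one_mul f := rfl
  mul_one f := rfl

/-- The zero constant endomorphism `ξ_θ`, sending every element of `B_n` to `θ`. -/
def xiTheta (n : ℕ) : BrandtEnd n := ⟨fun _ => (none : Brandt n), fun _ _ => rfl⟩

/-- If `f = g₁ g₂ ⋯ g_k` is a (nonempty) product of endomorphisms of `B_n` and
`f` is the zero constant map `ξ_θ`, then `g_j = ξ_θ` for some `j`. -/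
@[simp] lemma bmul_none_right {n : ℕ} (x : Brandt n) : bmul x none = none := by
  cases x <;> rfl

@[simp] lemma bmul_none_left {n : ℕ} (x : Brandt n) : bmul none x = none := rfl

/-- If an endomorphism kills one nonzero element, it kills everything. -/
lemma endo_kill {n : ℕ} (g : Brandt n → Brandt n) (hg : IsEndo g)
    (p : Fin n × Fin n) (hp : g (some p) = none) : ∀ x, g x = none := by
  have hnone : g none = none := by
    have := hg (some p) none
    simp [hp] at this
    simpa using this
  intro x
  cases x with
  | none => exact hnone
  | some q =>
    obtain ⟨k, l⟩ := q
    have key : (some (k, p.1) * some p) * some (p.2, l) = (some (k, l) : Brandt n) := by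
      show bmul (bmul (some (k, p.1)) (some p)) (some (p.2, l)) = some (k, l)
      simp [bmul]
    calc g (some (k, l)) = g ((some (k, p.1) * some p) * some (p.2, l)) := by rw [key]
      _ = (g (some (k, p.1)) * g (some p)) * g (some (p.2, l)) := by
            rw [hg, hg]
      _ = none := by simp [hp]

lemma exists_some_of_ne_xi {n : ℕ} (g : BrandtEnd n) (hg : g ≠ xiTheta n) :
    ∃ x p, g.1 x = some p := by
  by_contra h
  push_neg at h
  apply hg
  apply Subtype.ext
  funext x
  cases hx : g.1 x with
  | none => rfl
  | some p => exact absurd hx (h x p)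

lemma prod_fun {n : ℕ} (h : BrandtEnd n) (t : List (BrandtEnd n)) :
    ((h :: t).prod).1 = t.prod.1 ∘ h.1 := by
  rw [List.prod_cons]; rfl

theorem prod_eq_zero_const_exists (n : ℕ) (hn : 1 ≤ n)
    (L : List (BrandtEnd n)) (hL : L ≠ []) (f : BrandtEnd n) (hf : f = L.prod)
    (hzero : f = xiTheta n) : ∃ g ∈ L, g = xiTheta n := by
  subst hf
  induction L with
  | nil => exact absurd rfl hL
  | cons h t ih =>
    by_cases hh : h = xiTheta n
    · exact ⟨h, List.mem_cons_self, hh⟩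
    · obtain ⟨x, p, hx⟩ := exists_some_of_ne_xi h hh
      have hall : ∀ y, ((h :: t).prod).1 y = none := by
        intro y
        rw [hzero]; rfl
      have hp : t.prod.1 (some p) = none := by
        have := hall x
        rw [prod_fun, Function.comp_apply, hx] at this
        exact this
      have htprod : ∀ y, t.prod.1 y = none := endo_kill _ t.prod.2 p hp
      cases t with
      | nil =>
        exfalso
        have := htprod (some (⟨0, hn⟩, ⟨0, hn⟩))
        simp [List.prod_nil] at this
        exact Option.some_ne_none _ (show (some (⟨0, hn⟩, ⟨0, hn⟩) : Brandt n) = none from this)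
      | cons h' t' =>
        have : (h' :: t').prod = xiTheta n := by
          apply Subtype.ext; funext y; exact htprod y
        obtain ⟨g, hg, hgx⟩ := ih (by simp) this
        exact ⟨g, List.mem_cons_of_mem _ hg, hgx⟩
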